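/- If f is supported in B₀(λπ) with λ = 2/(3+√2), then for all v ∈ [−π,π]³ and all v_* ∈ supp f, the post-collision velocities v′, v′_* and the point v − g (g = v − v_*) relevant in the truncated collision operator lie in B₀((2+√2)λπ) ⊆ [−π,π]³, so periodization of f on [−π,π]³ introduces no aliasing overlap of the supports. -/
import Mathlib


open Real

theorem no_aliasing_support (lam R : ℝ)
    (hlam : lam = 2 / (3 + Real.sqrt 2)) (hR : R = lam * Real.pi)
    (v g ω : EuclideanSpace ℝ (Fin 3)) (hω : ‖ω‖ = 1)
    (hv : ‖v‖ ≤ Real.sqrt 2 * R) (hg : ‖g‖ ≤ 2 * R)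
    (vs v' vs' : EuclideanSpace ℝ (Fin 3)) (hvs : vs = v - g)
    (hv' : v' = (2:ℝ)⁻¹ • (v + vs + ‖v - vs‖ • ω))
    (hvs' : vs' = (2:ℝ)⁻¹ • (v + vs - ‖v - vs‖ • ω)) :
    ‖v'‖ ≤ (2 + Real.sqrt 2) * R ∧ ‖vs'‖ ≤ (2 + Real.sqrt 2) * R ∧
    ‖v - g‖ ≤ (2 + Real.sqrt 2) * R ∧ (2 + Real.sqrt 2) * R ≤ 2 * Real.pi := by
  have hs2 : (0:ℝ) ≤ Real.sqrt 2 := Real.sqrt_nonneg 2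
  have h3 : (0:ℝ) < 3 + Real.sqrt 2 := by linarith
  have hRpos : 0 ≤ R := by
    rw [hR, hlam]
    positivity
  have hvvs : v - vs = g := by rw [hvs]; abel
  have hvsn : ‖vs‖ ≤ ‖v‖ + ‖g‖ := by
    rw [hvs]; exact norm_sub_le v g
  have key : ∀ s : ℝ, |s| = 1 →
      ‖(2:ℝ)⁻¹ • (v + vs + (s * ‖v - vs‖) • ω)‖ ≤ (2 + Real.sqrt 2) * R := by
    intro s hs
    rw [norm_smul, hvvs]
    have h1 : ‖v + vs + (s * ‖g‖) • ω‖ ≤ ‖v‖ + ‖vs‖ + ‖g‖ := by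
      calc ‖v + vs + (s * ‖g‖) • ω‖ ≤ ‖v + vs‖ + ‖(s * ‖g‖) • ω‖ := norm_add_le _ _
        _ ≤ ‖v‖ + ‖vs‖ + ‖g‖ := by
            rw [norm_smul, hω, mul_one]
            have : ‖s * ‖g‖‖ = ‖g‖ := by
              rw [norm_mul, Real.norm_eq_abs, hs, one_mul, norm_norm]
            rw [this]
            have := norm_add_le v vs
            linarith
    have : ‖v‖ + ‖vs‖ + ‖g‖ ≤ 2 * (Real.sqrt 2 * R) + 2 * (2 * R) := by linarith
    have h2 : ‖((2:ℝ)⁻¹)‖ = 2⁻¹ := by norm_num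
    rw [h2]
    nlinarith [norm_nonneg (v + vs + (s * ‖g‖) • ω)]
  refine ⟨?_, ?_, ?_, ?_⟩
  · have := key 1 (by norm_num)
    simpa [hv', one_mul] using this
  · have := key (-1) (by norm_num)
    rw [hvs']
    have e : v + vs - ‖v - vs‖ • ω = v + vs + ((-1 : ℝ) * ‖v - vs‖) • ω := by
      rw [neg_one_mul, neg_smul]; abel
    rw [e]; exact this
  · calc ‖v - g‖ ≤ ‖v‖ + ‖g‖ := norm_sub_le v g
      _ ≤ Real.sqrt 2 * R + 2 * R := by linarith
      _ ≤ (2 + Real.sqrt 2) * R := by nlinarith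
  · rw [hR, hlam]
    rw [div_mul_eq_mul_div, ← mul_div_assoc, div_le_iff₀ h3]
    nlinarith [Real.pi_pos]
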